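/- Let (X1, X2, X3, X4) be a random vector on finite sets whose entropy function equals a·r1 + b·r2 with a, b ≥ 0, where r1 is the rank function of the uniform matroid U_{2,4} on {1,2,3,4} and r2 is the rank function of the matroid U^{123}_{2,3} (which restricts to U_{2,3} on {1,2,3} with 4 a loop). Then X1, X2, X3 are each uniformly distributed, |𝒳1| = |𝒳2| = |𝒳3|, and a + b = log|𝒳1|. -/

import Mathlib

open Finset
open scoped BigOperators
noncomputable section

/-- Probability that the `A`-marginal of the random vector with joint pmf `p`
takes the same value as on `x`. -/
def margProb {n : ℕ} {m : Fin n → ℕ} (p : (∀ i, Fin (m i)) → ℝ)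
    (A : Finset (Fin n)) (x : ∀ i, Fin (m i)) : ℝ :=
  ∑ y : ∀ i, Fin (m i), if ∀ i ∈ A, y i = x i then p y else 0

/-- The Shannon entropy `H(X_A)` of the subvector indexed by `A`, for the random
vector with joint pmf `p`. -/
def jointEntropy {n : ℕ} {m : Fin n → ℕ} (p : (∀ i, Fin (m i)) → ℝ)
    (A : Finset (Fin n)) : ℝ :=
  -∑ x : ∀ i, Fin (m i), p x * Real.log (margProb p A x)

/-- `p` is a probability mass function. -/
def IsPMF {α : Type*} [Fintype α] (p : α → ℝ) : Prop :=
  (∀ x, 0 ≤ p x) ∧ ∑ x, p x = 1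

/-- `h` is an entropy function of degree `n`: it arises as `A ↦ H(X_A)` for a
random vector `(X_1, …, X_n)` on finite sets. -/
def IsEntropyFunc (n : ℕ) (h : Finset (Fin n) → ℝ) : Prop :=
  ∃ (m : Fin n → ℕ) (p : (∀ i, Fin (m i)) → ℝ), IsPMF p ∧ ∀ A, jointEntropy p A = h A

/-- Marginal probability of the single coordinate `i` taking value `x`. -/
def marg1 {n : ℕ} {m : Fin n → ℕ} (p : (∀ i, Fin (m i)) → ℝ)
    (i : Fin n) (x : Fin (m i)) : ℝ :=
  ∑ y : ∀ j, Fin (m j), if y i = x then p y else 0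

/-- Marginal probability of the pair of coordinates `(i, j)` taking values `(x, y)`. -/
def marg2 {n : ℕ} {m : Fin n → ℕ} (p : (∀ i, Fin (m i)) → ℝ)
    (i j : Fin n) (x : Fin (m i)) (y : Fin (m j)) : ℝ :=
  ∑ z : ∀ k, Fin (m k), if z i = x ∧ z j = y then p z else 0

/-- Rank function of the uniform matroid `U_{2,4}` on `{1,2,3,4}`. -/
def r24 (A : Finset (Fin 4)) : ℝ := min 2 (A.card : ℝ)

/-- Rank function of the matroid `U^{123}_{2,3}`: a `U_{2,3}` on `{1,2,3}` with the
fourth element a loop (indices `0,1,2` and loop `3`). -/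
def rU23_123 (A : Finset (Fin 4)) : ℝ := min 2 ((A ∩ ({0, 1, 2} : Finset (Fin 4))).card : ℝ)

/-! On `{X₁, X₂, X₃}` the entropy function is `(a + b)` times the rank function of `U_{2,3}`.
Equality in subadditivity makes the three variables pairwise independent, and
`H(X_i, X_j) = H(X₁, X₂, X₃)` makes each of them a function of the other two. At a support
point `z` this gives `P(z_i) P(z_j) = P(z_i, z_j) = P(z) = P(z_j, z_k) = P(z_j) P(z_k)`, hence
`P(z_i) = P(z_k)`. By independence and positivity every pair of values occurs on the support,
so all the one-dimensional marginals share a single value, which must be `1 / |𝒳_i|`. -/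

open Real InformationTheory

/-- Equality case of Gibbs' inequality: the terms `w · klFun (q / w)` are nonnegative and sum
to zero. -/
theorem eq_of_sum_mul_log_eq {α : Type*} [Fintype α] {q w : α → ℝ} (hq : ∀ x, 0 ≤ q x)
    (hw : ∀ x, 0 < w x) (hsum : ∑ x, q x = ∑ x, w x)
    (hlog : ∑ x, q x * log (q x) = ∑ x, q x * log (w x)) : q = w := by
  have hterm : ∀ x, w x * klFun (q x / w x) = q x * log (q x) - q x * log (w x) + w x - q x := by
    intro x
    rcases (hq x).eq_or_lt with h | h
    · simp [← h, klFun_zero]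
    · have hw0 := (hw x).ne'
      rw [klFun_apply, log_div h.ne' hw0]
      field_simp
  have hzero : ∑ x, w x * klFun (q x / w x) = 0 := by
    simp only [hterm, sum_add_distrib, sum_sub_distrib, hlog, hsum]
    ring
  have hnonneg : ∀ x, 0 ≤ w x * klFun (q x / w x) := fun x =>
    mul_nonneg (hw x).le (klFun_nonneg (div_nonneg (hq x) (hw x).le))
  funext x
  have hx := (sum_eq_zero_iff_of_nonneg fun x _ => hnonneg x).mp hzero x (mem_univ x)
  rwa [mul_eq_zero, or_iff_right (hw x).ne', klFun_eq_zero_iff (div_nonneg (hq x) (hw x).le),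
    div_eq_one_iff_eq (hw x).ne'] at hx

theorem sum_mul_comp_eq_sum_fiber {α β : Type*} [Fintype α] [Fintype β] [DecidableEq β]
    (p : α → ℝ) (f : α → β) (g : β → ℝ) :
    ∑ x, p x * g (f x) = ∑ v, (∑ x, if f x = v then p x else 0) * g v := by
  simp_rw [sum_mul, ite_mul, zero_mul]
  rw [sum_comm]
  simp

section Marginals

variable {n : ℕ} {m : Fin n → ℕ} (p : (∀ i, Fin (m i)) → ℝ)

theorem margProb_singleton (i : Fin n) (x : ∀ i, Fin (m i)) :
    margProb p {i} x = marg1 p i (x i) := by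
  simp [margProb, marg1]

theorem margProb_pair (i j : Fin n) (x : ∀ i, Fin (m i)) :
    margProb p {i, j} x = marg2 p i j (x i) (x j) := by
  simp [margProb, marg2]

theorem marg2_eq_sum_ite (i j : Fin n) (vw : Fin (m i) × Fin (m j)) :
    marg2 p i j vw.1 vw.2 = ∑ x, if (x i, x j) = vw then p x else 0 := by
  simp [marg2, Prod.ext_iff]

theorem sum_marg1 (i : Fin n) : ∑ v, marg1 p i v = ∑ x, p x := by
  simpa [marg1] using (sum_mul_comp_eq_sum_fiber p (· i) fun _ => 1).symm

theorem sum_marg2 (i j : Fin n) :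
    ∑ vw : Fin (m i) × Fin (m j), marg2 p i j vw.1 vw.2 = ∑ x, p x := by
  simpa [marg2_eq_sum_ite] using (sum_mul_comp_eq_sum_fiber p (fun x => (x i, x j)) fun _ => 1).symm

theorem marg2_nonneg (hp : ∀ x, 0 ≤ p x) (i j : Fin n) (v : Fin (m i)) (w : Fin (m j)) :
    0 ≤ marg2 p i j v w :=
  sum_nonneg fun y _ => ite_nonneg (hp y) le_rfl

theorem jointEntropy_singleton (i : Fin n) :
    jointEntropy p {i} = -∑ v, marg1 p i v * log (marg1 p i v) := by
  simp_rw [jointEntropy, margProb_singleton]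
  rw [sum_mul_comp_eq_sum_fiber p (· i) fun v => log (marg1 p i v)]
  rfl

theorem jointEntropy_eq_sum_marg2 {A : Finset (Fin n)} {i j : Fin n}
    (g : Fin (m i) × Fin (m j) → ℝ) (hA : ∀ x, margProb p A x = g (x i, x j)) :
    jointEntropy p A = -∑ vw, marg2 p i j vw.1 vw.2 * log (g vw) := by
  simp_rw [jointEntropy, hA, marg2_eq_sum_ite]
  rw [sum_mul_comp_eq_sum_fiber p (fun x => (x i, x j)) fun vw => log (g vw)]

theorem marg2_eq_mul_of_jointEntropy_pair_eq (hp : IsPMF p)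
    (hpos : ∀ i v, 0 < marg1 p i v) {i j : Fin n}
    (hH : jointEntropy p {i, j} = jointEntropy p {i} + jointEntropy p {j})
    (v : Fin (m i)) (w : Fin (m j)) : marg2 p i j v w = marg1 p i v * marg1 p j w := by
  rw [jointEntropy_eq_sum_marg2 p (fun vw => marg2 p i j vw.1 vw.2) (margProb_pair p i j),
    jointEntropy_eq_sum_marg2 p (fun vw => marg1 p i vw.1) (margProb_singleton p i),
    jointEntropy_eq_sum_marg2 p (fun vw => marg1 p j vw.2) (margProb_singleton p j)] at hH
  have hprod := eq_of_sum_mul_log_eq (q := fun vw : Fin (m i) × Fin (m j) => marg2 p i j vw.1 vw.2)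
    (w := fun vw => marg1 p i vw.1 * marg1 p j vw.2)
    (fun vw => marg2_nonneg p hp.1 i j vw.1 vw.2) (fun vw => mul_pos (hpos i vw.1) (hpos j vw.2))
    (by rw [sum_marg2, Fintype.sum_prod_type, ← sum_mul_sum, sum_marg1, sum_marg1, hp.2, one_mul])
    (by simp only [log_mul (hpos i _).ne' (hpos j _).ne', mul_add, sum_add_distrib]; linarith)
  exact congrFun hprod (v, w)

theorem le_margProb (hp : ∀ x, 0 ≤ p x) (A : Finset (Fin n)) (x : ∀ i, Fin (m i)) :
    p x ≤ margProb p A x := by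
  simpa [margProb] using single_le_sum (fun y _ => ite_nonneg (hp y) le_rfl) (mem_univ x)
    (f := fun y => if ∀ i ∈ A, y i = x i then p y else 0)

theorem margProb_anti (hp : ∀ x, 0 ≤ p x) {A B : Finset (Fin n)} (hAB : A ⊆ B)
    (x : ∀ i, Fin (m i)) : margProb p B x ≤ margProb p A x := by
  refine sum_le_sum fun y _ => ?_
  by_cases h : ∀ i ∈ B, y i = x i
  · rw [if_pos h, if_pos fun i hi => h i (hAB hi)]
  · rw [if_neg h]
    exact ite_nonneg (hp y) le_rfl

theorem margProb_eq_of_jointEntropy_eq (hp : ∀ x, 0 ≤ p x) {A B : Finset (Fin n)}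
    (hAB : A ⊆ B) (hH : jointEntropy p B = jointEntropy p A) {x : ∀ i, Fin (m i)}
    (hx : 0 < p x) :
    margProb p B x = margProb p A x := by
  have hB : ∀ y, 0 < p y → 0 < margProb p B y := fun y hy => hy.trans_le (le_margProb p hp B y)
  have hgap : ∀ y, 0 ≤ p y * (log (margProb p A y) - log (margProb p B y)) := by
    intro y
    rcases (hp y).eq_or_lt with h | h
    · simp [← h]
    · exact mul_nonneg h.le (sub_nonneg.mpr (log_le_log (hB y h) (margProb_anti p hp hAB y)))
  have hsum : ∑ y, p y * (log (margProb p A y) - log (margProb p B y)) = 0 := by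
    simp only [jointEntropy] at hH
    simp only [mul_sub, sum_sub_distrib]
    linarith
  have hlog := (sum_eq_zero_iff_of_nonneg fun y _ => hgap y).mp hsum x (mem_univ x)
  rw [mul_eq_zero, or_iff_right hx.ne', sub_eq_zero] at hlog
  exact (log_injOn_pos (hB x hx |>.trans_le (margProb_anti p hp hAB x)) (hB x hx) hlog).symm

theorem exists_pos_of_marg2_pos (hp : ∀ x, 0 ≤ p x) {i j : Fin n}
    {v : Fin (m i)} {w : Fin (m j)} (h : 0 < marg2 p i j v w) :
    ∃ z, 0 < p z ∧ z i = v ∧ z j = w := by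
  obtain ⟨z, -, hz⟩ := exists_ne_zero_of_sum_ne_zero h.ne'
  split_ifs at hz with hzv
  · exact ⟨z, (hp z).lt_of_ne' hz, hzv⟩
  · exact absurd rfl hz

theorem marg1_eq_of_pairwise_indep_of_jointEntropy_eq (hp : ∀ x, 0 ≤ p x)
    (hpos : ∀ i v, 0 < marg1 p i v) {i j k : Fin n} {B : Finset (Fin n)}
    (hij : {i, j} ⊆ B) (hjk : {j, k} ⊆ B)
    (hHij : jointEntropy p B = jointEntropy p {i, j})
    (hHjk : jointEntropy p B = jointEntropy p {j, k})
    (hindij : ∀ v w, marg2 p i j v w = marg1 p i v * marg1 p j w)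
    (hindjk : ∀ v w, marg2 p j k v w = marg1 p j v * marg1 p k w)
    (hindik : ∀ v w, marg2 p i k v w = marg1 p i v * marg1 p k w)
    (v : Fin (m i)) (w : Fin (m k)) : marg1 p i v = marg1 p k w := by
  obtain ⟨z, hz, rfl, rfl⟩ :=
    exists_pos_of_marg2_pos p hp (by rw [hindik]; exact mul_pos (hpos i v) (hpos k w))
  have hmul : marg1 p j (z j) * marg1 p i (z i) = marg1 p j (z j) * marg1 p k (z k) := by
    rw [mul_comm, ← hindij, ← hindjk, ← margProb_pair, ← margProb_pair,
      ← margProb_eq_of_jointEntropy_eq p hp hij hHij hz,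
      margProb_eq_of_jointEntropy_eq p hp hjk hHjk hz]
  exact mul_left_cancel₀ (hpos j (z j)).ne' hmul

theorem marg1_eq_of_jointEntropy_eq_rank_U23 (hp : IsPMF p) (hpos : ∀ i v, 0 < marg1 p i v)
    {i j k : Fin n} (hij : i ≠ j) (hjk : j ≠ k) (hik : i ≠ k) {c : ℝ}
    (hH : ∀ A ⊆ {i, j, k}, jointEntropy p A = c * min 2 (#A : ℝ))
    (v : Fin (m i)) (w : Fin (m k)) : marg1 p i v = marg1 p k w := by
  set B : Finset (Fin n) := {i, j, k}
  have hpair : ∀ l ∈ B, ∀ l' ∈ B, {l, l'} ⊆ B := fun l hl l' hl' =>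
    insert_subset hl (singleton_subset_iff.mpr hl')
  have hH1 : ∀ l ∈ B, jointEntropy p {l} = c := fun l hl => by
    rw [hH _ (singleton_subset_iff.mpr hl), card_singleton]
    norm_num
  have hH2 : ∀ l ∈ B, ∀ l' ∈ B, l ≠ l' → jointEntropy p {l, l'} = 2 * c :=
    fun l hl l' hl' hll' => by
      rw [hH _ (hpair l hl l' hl'), card_pair hll']
      norm_num
      ring
  have hHB : jointEntropy p B = 2 * c := by
    rw [hH B subset_rfl, card_eq_three.mpr ⟨i, j, k, hij, hik, hjk, rfl⟩]
    norm_num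
    ring
  have hind : ∀ l ∈ B, ∀ l' ∈ B, l ≠ l' →
      ∀ v w, marg2 p l l' v w = marg1 p l v * marg1 p l' w :=
    fun l hl l' hl' hll' => marg2_eq_mul_of_jointEntropy_pair_eq p hp hpos (by
      rw [hH2 l hl l' hl' hll', hH1 l hl, hH1 l' hl']
      ring)
  have hi : i ∈ B := by simp [B]
  have hj : j ∈ B := by simp [B]
  have hk : k ∈ B := by simp [B]
  exact marg1_eq_of_pairwise_indep_of_jointEntropy_eq p hp.1 hpos
    (hpair i hi j hj) (hpair j hj k hk)
    (hHB.trans (hH2 i hi j hj hij).symm) (hHB.trans (hH2 j hj k hk hjk).symm)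
    (hind i hi j hj hij) (hind j hj k hk hjk) (hind i hi k hk hik) v w

theorem eq_inv_of_marg1_eq (hps : ∑ x, p x = 1) {i : Fin n} {c : ℝ}
    (h : ∀ v, marg1 p i v = c) :
    c = (m i : ℝ)⁻¹ := by
  have hsum := sum_marg1 p i
  rw [hps, sum_congr rfl fun v _ => h v, sum_const, card_univ, Fintype.card_fin,
    nsmul_eq_mul] at hsum
  exact eq_inv_of_mul_eq_one_right hsum

theorem jointEntropy_singleton_of_marg1_eq_inv {i : Fin n}
    (h : ∀ v, marg1 p i v = (m i : ℝ)⁻¹) :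
    jointEntropy p {i} = log (m i) := by
  simp only [jointEntropy_singleton, h, sum_const, card_univ, Fintype.card_fin, nsmul_eq_mul,
    log_inv, mul_neg, neg_neg]
  by_cases h0 : (m i : ℝ) = 0 <;> simp [h0]

end Marginals

theorem statement6_general {m : Fin 4 → ℕ} (p : (∀ i, Fin (m i)) → ℝ)
    (hpmf : IsPMF p)
    (hpos : ∀ (i : Fin 4) (x : Fin (m i)), 0 < marg1 p i x)
    (a b : ℝ)
    (hEnt : ∀ A : Finset (Fin 4), jointEntropy p A = a * r24 A + b * rU23_123 A) :
    (∀ i : Fin 4, i ≠ 3 → ∀ x : Fin (m i), marg1 p i x = (m i : ℝ)⁻¹) ∧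
    m 0 = m 1 ∧ m 1 = m 2 ∧ a + b = Real.log (m 0) := by
  have hH : ∀ A ⊆ {0, 1, 2}, jointEntropy p A = (a + b) * min 2 (#A : ℝ) := by
    intro A hA
    rw [hEnt, r24, rU23_123, inter_eq_left.mpr hA]
    ring
  have h02 := marg1_eq_of_jointEntropy_eq_rank_U23 p hpmf hpos (j := 1)
    (by decide) (by decide) (by decide) hH
  have h12 := marg1_eq_of_jointEntropy_eq_rank_U23 p hpmf hpos (j := 0)
    (by decide) (by decide) (by decide) (insert_comm (1 : Fin 4) 0 {2} ▸ hH)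
  obtain ⟨x, -, -⟩ := exists_ne_zero_of_sum_ne_zero (hpmf.2 ▸ one_ne_zero : ∑ x, p x ≠ 0)
  have hc0 := eq_inv_of_marg1_eq p hpmf.2 fun v => h02 v (x 2)
  have hc1 := eq_inv_of_marg1_eq p hpmf.2 fun v => h12 v (x 2)
  have hc2 := eq_inv_of_marg1_eq p hpmf.2 fun w => (h02 (x 0) w).symm.trans (h02 (x 0) (x 2))
  refine ⟨fun i hi v => ?_, ?_, ?_, ?_⟩
  · fin_cases i
    · exact (h02 v (x 2)).trans hc0
    · exact (h12 v (x 2)).trans hc1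
    · exact ((h02 (x 0) v).symm.trans (h02 (x 0) (x 2))).trans hc2
    · exact absurd rfl hi
  · exact_mod_cast inv_injective (hc0.symm.trans hc1)
  · exact_mod_cast inv_injective (hc1.symm.trans hc2)
  · rw [← jointEntropy_singleton_of_marg1_eq_inv p fun v => (h02 v (x 2)).trans hc0,
      hH {0} (by decide), card_singleton]
    norm_num

/-- If the entropy function of `(X1,X2,X3,X4)` equals `a·r(U_{2,4}) + b·r(U^{123}_{2,3})`
with `a, b ≥ 0`, then `X1, X2, X3` are each uniform, their alphabets have a common
size, and `a + b = log` of that size. -/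
theorem statement6 {m : Fin 4 → ℕ} (p : (∀ i, Fin (m i)) → ℝ)
    (hpmf : IsPMF p)
    (hpos : ∀ (i : Fin 4) (x : Fin (m i)), 0 < marg1 p i x)
    (a b : ℝ) (ha : 0 ≤ a) (hb : 0 ≤ b)
    (hEnt : ∀ A : Finset (Fin 4), jointEntropy p A = a * r24 A + b * rU23_123 A) :
    (∀ i : Fin 4, i ≠ 3 → ∀ x : Fin (m i), marg1 p i x = (m i : ℝ)⁻¹) ∧
    m 0 = m 1 ∧ m 1 = m 2 ∧ a + b = Real.log (m 0) :=
  statement6_general p hpmf hpos a b hEnt
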